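/- With notation as above, m_{E,σ} is surjective onto {[Ω] ∈ P(L_C) : q(Ω,Ω) = 0 and q(E,Ω) ≠ 0}: for every Ω ∈ L_C with q(Ω,Ω) = 0 and q(E,Ω) ≠ 0, after rescaling so that q(E,Ω) = 1, the element α = Ω − σ/q(E,σ) satisfies q(E,α) = 0 and m(α) is a scalar multiple of Ω (indeed m(α) = Ω). -/
import Mathlib


noncomputable def mirrorMap {V : Type*} [AddCommGroup V] [Module ℂ V]
    (q : V →ₗ[ℂ] V →ₗ[ℂ] ℂ) (E σ' α : V) : V :=
  (q E σ')⁻¹ • σ' + α -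
    ((1/2 : ℂ) * (q σ' σ' / (q E σ') ^ 2 + q α α + 2 * q α σ' / (q E σ'))) • E

/-- the mirror map is surjective onto `{Ω : q(Ω,Ω) = 0, q(E,Ω) ≠ 0}`:
after rescaling `Ω` so that `q(E,Ω) = 1`, the element `α = Ω − σ/q(E,σ)` satisfies
`q(E,α) = 0` and `m(α) = Ω`. -/
theorem stmt_3 {V : Type*} [AddCommGroup V] [Module ℂ V]
    (q : V →ₗ[ℂ] V →ₗ[ℂ] ℂ) (hsymm : ∀ x y, q x y = q y x)
    (E σ' : V) (hE : q E E = 0) (hEσ : q E σ' ≠ 0)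
    (Ω : V) (hΩ : q Ω Ω = 0) (hEΩ : q E Ω ≠ 0) :
    q E ((q E Ω)⁻¹ • Ω) = 1 ∧
    q E ((q E Ω)⁻¹ • Ω - (q E σ')⁻¹ • σ') = 0 ∧
    mirrorMap q E σ' ((q E Ω)⁻¹ • Ω - (q E σ')⁻¹ • σ') = (q E Ω)⁻¹ • Ω := by
  set c := (q E Ω)⁻¹ with hc
  set d := (q E σ')⁻¹ with hd
  set α := c • Ω - d • σ' with hα
  have h1 : q E (c • Ω) = 1 := by
    simp [map_smul, hc, inv_mul_cancel₀ hEΩ]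
  have h2 : q E α = 0 := by
    simp [hα, map_sub, map_smul, hc, hd, inv_mul_cancel₀ hEΩ, inv_mul_cancel₀ hEσ]
  refine ⟨h1, h2, ?_⟩
  have hαα : q α α = -2 * c * d * q Ω σ' + d * d * q σ' σ' := by
    simp only [hα, map_sub, map_smul, LinearMap.sub_apply, LinearMap.smul_apply,
      smul_eq_mul, hΩ]
    rw [hsymm σ' Ω]
    ring
  have hασ : q α σ' = c * q Ω σ' - d * q σ' σ' := by
    simp only [hα, map_sub, map_smul, LinearMap.sub_apply, LinearMap.smul_apply,
      smul_eq_mul]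
  have hcoef : ((1/2 : ℂ) * (q σ' σ' / (q E σ') ^ 2 + q α α + 2 * q α σ' / (q E σ'))) = 0 := by
    rw [hαα, hασ, hd, div_eq_mul_inv, div_eq_mul_inv, sq, mul_inv]
    ring
  rw [mirrorMap, hcoef, zero_smul, sub_zero, hα]
  abel
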